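/- arXiv:2504.19602 — 4 statements merged into one kernel-verified Lean document; each statement's English description precedes it below -/
import Mathlib

section
/- Let N be a positive integer and let x_1, ..., x_N be nonnegative real numbers in non-decreasing order with 0 ≤ x_1 ≤ x_2 ≤ ... ≤ x_N ≤ 1 and Σ_{i=1}^N x_i = 1. For any real exponents β_2 > β_1 > 0, and for every k with 1 ≤ k ≤ N, the normalized prefix sums satisfy (Σ_{i=1}^k x_i^{β_2}) / (Σ_{j=1}^N x_j^{β_2}) ≤ (Σ_{i=1}^k x_i^{β_1}) / (Σ_{j=1}^N x_j^{β_1}). Equivalently, the normalized power distribution with exponent β_2 is majorized by the one with exponent β_1. -/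
/-!
Cross-multiplying, the inequality says `A₂ (A₁ + T₁) ≤ A₁ (A₂ + T₂)` for the prefix sums `A_β`
and the tail sums `T_β`, i.e. `A₂ T₁ ≤ A₁ T₂`. Expanding both products, it suffices to compare
termwise: for `x i ≤ x j` one has `x i ^ β₂ * x j ^ β₁ ≤ x i ^ β₁ * x j ^ β₂`, because
`t ↦ t ^ (β₂ - β₁)` is monotone.
-/

open Finset

lemma Real.rpow_mul_rpow_le_rpow_mul_rpow {a b β₁ β₂ : ℝ} (ha : 0 ≤ a) (hab : a ≤ b)
    (hβ₁ : 0 ≤ β₁) (hβ : β₁ < β₂) :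
    a ^ β₂ * b ^ β₁ ≤ a ^ β₁ * b ^ β₂ := by
  rcases ha.eq_or_lt with rfl | ha
  · rw [Real.zero_rpow (by linarith), zero_mul]
    exact mul_nonneg (Real.rpow_nonneg le_rfl _) (Real.rpow_nonneg hab _)
  have hb : 0 < b := ha.trans_le hab
  have hγ : a ^ (β₂ - β₁) ≤ b ^ (β₂ - β₁) := Real.rpow_le_rpow ha.le hab (by linarith)
  calc a ^ β₂ * b ^ β₁ = a ^ (β₂ - β₁) * (a ^ β₁ * b ^ β₁) := by
        rw [← mul_assoc, ← Real.rpow_add ha, sub_add_cancel]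
    _ ≤ b ^ (β₂ - β₁) * (a ^ β₁ * b ^ β₁) := by gcongr
    _ = a ^ β₁ * b ^ β₂ := by
        rw [mul_left_comm, ← Real.rpow_add hb, sub_add_cancel]

lemma sum_range_div_sum_range_le_of_cross_le {f g : ℕ → ℝ} {k N : ℕ} (hkN : k ≤ N)
    (hf : 0 < ∑ i ∈ range N, f i) (hg : 0 < ∑ i ∈ range N, g i)
    (hcross : ∀ i < k, ∀ j ∈ Ico k N, f i * g j ≤ g i * f j) :
    (∑ i ∈ range k, f i) / (∑ i ∈ range N, f i)
      ≤ (∑ i ∈ range k, g i) / (∑ i ∈ range N, g i) := by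
  have hsplit : ∀ h : ℕ → ℝ, ∑ i ∈ range N, h i = ∑ i ∈ range k, h i + ∑ j ∈ Ico k N, h j :=
    fun h => (sum_range_add_sum_Ico h hkN).symm
  rw [div_le_div_iff₀ hf hg, hsplit f, hsplit g, mul_add, mul_add, mul_comm]
  refine add_le_add le_rfl ?_
  rw [sum_mul_sum, sum_mul_sum]
  exact sum_le_sum fun i hi => sum_le_sum fun j hj => hcross i (mem_range.mp hi) j hj

lemma sum_range_rpow_pos {x : ℕ → ℝ} {N : ℕ} (hnonneg : ∀ i, i < N → 0 ≤ x i)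
    (hpos : 0 < ∑ i ∈ range N, x i) (β : ℝ) : 0 < ∑ i ∈ range N, x i ^ β := by
  obtain ⟨i, hi, hxi⟩ : ∃ i ∈ range N, (0 : ℝ) < x i :=
    exists_lt_of_sum_lt (by simpa using hpos)
  exact sum_pos' (fun j hj => Real.rpow_nonneg (hnonneg j (mem_range.mp hj)) β)
    ⟨i, hi, Real.rpow_pos_of_pos hxi β⟩

theorem enhancedERA_majorization_general
    (N : ℕ) (x : ℕ → ℝ)
    (hnonneg : ∀ i, i < N → 0 ≤ x i)
    (hmono : ∀ i j, i ≤ j → j < N → x i ≤ x j)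
    (hsum : ∑ i ∈ Finset.range N, x i = 1)
    (β₁ β₂ : ℝ) (hβ₁ : 0 < β₁) (hβ : β₁ < β₂)
    (k : ℕ) (hkN : k ≤ N) :
    (∑ i ∈ Finset.range k, x i ^ β₂) / (∑ j ∈ Finset.range N, x j ^ β₂)
      ≤ (∑ i ∈ Finset.range k, x i ^ β₁) / (∑ j ∈ Finset.range N, x j ^ β₁) := by
  have hpos : 0 < ∑ i ∈ range N, x i := hsum ▸ one_pos
  refine sum_range_div_sum_range_le_of_cross_le hkN (sum_range_rpow_pos hnonneg hpos β₂)
    (sum_range_rpow_pos hnonneg hpos β₁) fun i hik j hj => ?_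
  obtain ⟨hkj, hjN⟩ := mem_Ico.mp hj
  exact Real.rpow_mul_rpow_le_rpow_mul_rpow (hnonneg i (hik.trans_le hkN))
    (hmono i j (hik.le.trans hkj) hjN) hβ₁.le hβ

/-- **Majorization via power exponents (prefix-sum form).**
If `0 ≤ x 0 ≤ x 1 ≤ ⋯ ≤ x (N-1) ≤ 1` with `∑ x i = 1`, then for real
exponents `β₂ > β₁ > 0` and every `1 ≤ k ≤ N`, the normalized prefix sums of
the power distribution satisfy
`(∑_{i<k} x i ^ β₂) / (∑_{j<N} x j ^ β₂) ≤ (∑_{i<k} x i ^ β₁) / (∑_{j<N} x j ^ β₁)`,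
i.e. the normalized power distribution with exponent `β₂` is majorized by the
one with exponent `β₁`. -/
theorem enhancedERA_majorization
    (N : ℕ) (hN : 0 < N) (x : ℕ → ℝ)
    (hnonneg : ∀ i, i < N → 0 ≤ x i)
    (hle1 : ∀ i, i < N → x i ≤ 1)
    (hmono : ∀ i j, i ≤ j → j < N → x i ≤ x j)
    (hsum : ∑ i ∈ Finset.range N, x i = 1)
    (β₁ β₂ : ℝ) (hβ₁ : 0 < β₁) (hβ : β₁ < β₂)
    (k : ℕ) (hk1 : 1 ≤ k) (hkN : k ≤ N) :
    (∑ i ∈ Finset.range k, x i ^ β₂) / (∑ j ∈ Finset.range N, x j ^ β₂)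
      ≤ (∑ i ∈ Finset.range k, x i ^ β₁) / (∑ j ∈ Finset.range N, x j ^ β₁) :=
  enhancedERA_majorization_general N x hnonneg hmono hsum β₁ β₂ hβ₁ hβ k hkN
end

section
/- Let N be a positive integer and let x_1, ..., x_N be nonnegative real numbers in non-decreasing order (x_1 ≤ x_2 ≤ ... ≤ x_N). For any real exponents β_2 > β_1 > 0 and every k with 1 ≤ k ≤ N, the cross-product inequality holds: (Σ_{i=1}^k x_i^{β_2}) · (Σ_{j=1}^N x_j^{β_1}) ≤ (Σ_{i=1}^k x_i^{β_1}) · (Σ_{j=1}^N x_j^{β_2}). -/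
open Finset

lemma rpow_mul_rpow_le_rpow_mul_rpow {a b p q : ℝ} (ha : 0 ≤ a) (hab : a ≤ b)
    (hp : 0 < p) (hpq : p ≤ q) :
    a ^ q * b ^ p ≤ a ^ p * b ^ q := by
  have hb : 0 ≤ b := ha.trans hab
  have hq : p + (q - p) ≠ 0 := by rw [add_sub_cancel]; linarith
  have hsplit : ∀ c : ℝ, 0 ≤ c → c ^ q = c ^ p * c ^ (q - p) := fun c hc => by
    rw [← Real.rpow_add' hc hq, add_sub_cancel]
  rw [hsplit a ha, hsplit b hb, mul_right_comm, mul_assoc]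
  gcongr

section OrderedSemiring

variable {R ι : Type*} [CommSemiring R] [PartialOrder R] [IsOrderedRing R]

lemma sum_mul_sum_le_sum_mul_sum_of_cross_le {s t : Finset ι} {f g : ι → R}
    (h : ∀ i ∈ s, ∀ j ∈ t, f i * g j ≤ g i * f j) :
    (∑ i ∈ s, f i) * (∑ j ∈ t, g j) ≤ (∑ i ∈ s, g i) * (∑ j ∈ t, f j) := by
  simp_rw [sum_mul_sum]
  exact sum_le_sum fun i hi => sum_le_sum fun j hj => h i hi j hj

/-- The cross terms inside the prefix `range k` cancel, so only pairs `i < k ≤ j` matter. -/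
lemma sum_range_mul_sum_range_le_of_cross_le {k N : ℕ} (hkN : k ≤ N) {f g : ℕ → R}
    (h : ∀ i j, i < k → k ≤ j → j < N → f i * g j ≤ g i * f j) :
    (∑ i ∈ range k, f i) * (∑ j ∈ range N, g j) ≤ (∑ i ∈ range k, g i) * (∑ j ∈ range N, f j) := by
  have hsplit : ∀ u : ℕ → R, ∑ j ∈ range N, u j = ∑ j ∈ range k, u j + ∑ j ∈ Ico k N, u j :=
    fun u => (sum_range_add_sum_Ico u hkN).symm
  have htail := sum_mul_sum_le_sum_mul_sum_of_cross_le (s := range k) (t := Ico k N) (f := f)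
    (g := g) fun i hi j hj => h i j (mem_range.1 hi) (mem_Ico.1 hj).1 (mem_Ico.1 hj).2
  rw [hsplit g, hsplit f, mul_add, mul_add, mul_comm (∑ i ∈ range k, f i)]
  exact add_le_add_right htail _

end OrderedSemiring

theorem powerSum_cross_product_inequality_general
    (N : ℕ) (x : ℕ → ℝ)
    (hnonneg : ∀ i, i < N → 0 ≤ x i)
    (hmono : ∀ i j, i ≤ j → j < N → x i ≤ x j)
    (β₁ β₂ : ℝ) (hβ₁ : 0 < β₁) (hβ : β₁ < β₂)
    (k : ℕ) (hkN : k ≤ N) :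
    (∑ i ∈ Finset.range k, x i ^ β₂) * (∑ j ∈ Finset.range N, x j ^ β₁)
      ≤ (∑ i ∈ Finset.range k, x i ^ β₁) * (∑ j ∈ Finset.range N, x j ^ β₂) :=
  sum_range_mul_sum_range_le_of_cross_le hkN fun i j hik hkj hjN =>
    rpow_mul_rpow_le_rpow_mul_rpow (hnonneg i (hik.trans_le hkN))
      (hmono i j (hik.le.trans hkj) hjN) hβ₁ hβ.le

/-- **Cross-product inequality for power sums of a sorted nonnegative vector.**
If `0 ≤ x 0 ≤ x 1 ≤ ⋯ ≤ x (N-1)`, then for real exponents `β₂ > β₁ > 0` and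
every `1 ≤ k ≤ N`,
`(∑_{i<k} x i ^ β₂) * (∑_{j<N} x j ^ β₁) ≤ (∑_{i<k} x i ^ β₁) * (∑_{j<N} x j ^ β₂)`. -/
theorem powerSum_cross_product_inequality
    (N : ℕ) (hN : 0 < N) (x : ℕ → ℝ)
    (hnonneg : ∀ i, i < N → 0 ≤ x i)
    (hmono : ∀ i j, i ≤ j → j < N → x i ≤ x j)
    (β₁ β₂ : ℝ) (hβ₁ : 0 < β₁) (hβ : β₁ < β₂)
    (k : ℕ) (hk1 : 1 ≤ k) (hkN : k ≤ N) :
    (∑ i ∈ Finset.range k, x i ^ β₂) * (∑ j ∈ Finset.range N, x j ^ β₁)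
      ≤ (∑ i ∈ Finset.range k, x i ^ β₁) * (∑ j ∈ Finset.range N, x j ^ β₂) :=
  powerSum_cross_product_inequality_general N x hnonneg hmono β₁ β₂ hβ₁ hβ k hkN
end

section
/- Let N be a positive integer and let x_1, ..., x_N be nonnegative real numbers with 0 ≤ x_i ≤ 1 for all i and Σ_{i=1}^N x_i = 1. For any real exponents β_2 > β_1 > 0, the Shannon entropy of the normalized power distribution with exponent β_2 is at most that with exponent β_1: H(X̂^{(β_2)}) ≤ H(X̂^{(β_1)}), where H(p) = −Σ_{i=1}^N p_i log p_i. In particular, increasing the power exponent β monotonically reduces the entropy of the normalized power distribution. -/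
open Finset Real

/-- Weighted Chebyshev-type inequality. -/
lemma weighted_cheb {ι : Type*} (s : Finset ι) (p f g : ι → ℝ)
    (hp : ∀ i ∈ s, 0 ≤ p i) (hsum : ∑ i ∈ s, p i = 1)
    (h : ∀ i ∈ s, ∀ j ∈ s, 0 < p i → 0 < p j → (g i - g j) * (f i - f j) ≤ 0) :
    ∑ i ∈ s, p i * (g i * f i) ≤ (∑ i ∈ s, p i * g i) * (∑ i ∈ s, p i * f i) := by
  have key : ∑ i ∈ s, ∑ j ∈ s, p i * p j * ((g i - g j) * (f i - f j)) ≤ 0 := by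
    apply Finset.sum_nonpos
    intro i hi
    apply Finset.sum_nonpos
    intro j hj
    rcases eq_or_lt_of_le (hp i hi) with h0 | h0
    · simp [← h0]
    rcases eq_or_lt_of_le (hp j hj) with h1 | h1
    · simp [← h1]
    exact mul_nonpos_of_nonneg_of_nonpos (by positivity) (h i hi j hj h0 h1)
  have expand : ∑ i ∈ s, ∑ j ∈ s, p i * p j * ((g i - g j) * (f i - f j))
      = 2 * (∑ i ∈ s, p i * (g i * f i)) - 2 * ((∑ i ∈ s, p i * g i) * (∑ i ∈ s, p i * f i)) := by
    have inner : ∀ i ∈ s, ∑ j ∈ s, p i * p j * ((g i - g j) * (f i - f j))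
        = p i * (g i * f i) - (p i * g i) * (∑ j ∈ s, p j * f j)
          - (p i * f i) * (∑ j ∈ s, p j * g j) + p i * (∑ j ∈ s, p j * (g j * f j)) := by
      intro i _
      have : ∀ j ∈ s, p i * p j * ((g i - g j) * (f i - f j))
          = (p i * (g i * f i)) * p j - (p i * g i) * (p j * f j)
            - (p i * f i) * (p j * g j) + p i * (p j * (g j * f j)) := by
        intro j _; ring
      rw [Finset.sum_congr rfl this]
      simp only [Finset.sum_add_distrib, Finset.sum_sub_distrib, ← Finset.mul_sum, hsum]
      ring
    rw [Finset.sum_congr rfl inner]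
    simp only [Finset.sum_add_distrib, Finset.sum_sub_distrib, ← Finset.sum_mul, ← Finset.mul_sum,
      hsum]
    ring
  nlinarith [key, expand]

/-- Gibbs' inequality. -/
lemma gibbs {ι : Type*} (s : Finset ι) (p q : ι → ℝ)
    (hp : ∀ i ∈ s, 0 ≤ p i) (hq : ∀ i ∈ s, 0 ≤ q i)
    (hps : ∑ i ∈ s, p i ≤ 1) (hqs : ∑ i ∈ s, q i = 1)
    (hsupp : ∀ i ∈ s, 0 < q i → 0 < p i) :
    ∑ i ∈ s, q i * Real.log (p i) ≤ ∑ i ∈ s, q i * Real.log (q i) := by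
  have key : ∀ i ∈ s, q i * Real.log (p i) - q i * Real.log (q i) ≤ p i - q i := by
    intro i hi
    rcases eq_or_lt_of_le (hq i hi) with h0 | h0
    · simp [← h0]; exact hp i hi
    · have hpi := hsupp i hi h0
      have hlog : Real.log (p i) - Real.log (q i) = Real.log (p i / q i) :=
        (Real.log_div hpi.ne' h0.ne').symm
      have h1 : q i * Real.log (p i) - q i * Real.log (q i)
          = q i * Real.log (p i / q i) := by rw [← hlog]; ring
      rw [h1]
      have h2 : Real.log (p i / q i) ≤ p i / q i - 1 :=
        Real.log_le_sub_one_of_pos (div_pos hpi h0)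
      calc q i * Real.log (p i / q i) ≤ q i * (p i / q i - 1) :=
            mul_le_mul_of_nonneg_left h2 h0.le
        _ = p i - q i := by field_simp
  have hsumle := Finset.sum_le_sum key
  rw [Finset.sum_sub_distrib, Finset.sum_sub_distrib, hqs] at hsumle
  linarith

/-- Powering a probability vector by `t > 1` and renormalizing decreases entropy. -/
lemma entropy_pow_le (N : ℕ) (p : ℕ → ℝ)
    (hp : ∀ i ∈ Finset.range N, 0 ≤ p i)
    (hsum : ∑ i ∈ Finset.range N, p i = 1)
    (t : ℝ) (ht : 1 < t) :
    -∑ i ∈ Finset.range N, (p i ^ t / ∑ j ∈ Finset.range N, p j ^ t) *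
        Real.log (p i ^ t / ∑ j ∈ Finset.range N, p j ^ t)
      ≤ -∑ i ∈ Finset.range N, p i * Real.log (p i) := by
  have ht0 : (0:ℝ) < t := by linarith
  -- some entry is positive
  obtain ⟨k, hk, hkpos⟩ : ∃ k ∈ Finset.range N, 0 < p k := by
    by_contra hcon
    push_neg at hcon
    have : ∑ i ∈ Finset.range N, p i ≤ 0 := Finset.sum_nonpos fun i hi => hcon i hi
    linarith
  set S : ℝ := ∑ j ∈ Finset.range N, p j ^ t with hS
  have hSpos : 0 < S := by
    have h1 : 0 < p k ^ t := Real.rpow_pos_of_pos hkpos t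
    have h2 : p k ^ t ≤ S :=
      Finset.single_le_sum (fun i hi => Real.rpow_nonneg (hp i hi) t) hk
    linarith
  set q : ℕ → ℝ := fun i => p i ^ t / S with hq
  have hqnn : ∀ i ∈ Finset.range N, 0 ≤ q i := fun i hi =>
    div_nonneg (Real.rpow_nonneg (hp i hi) t) hSpos.le
  have hqsum : ∑ i ∈ Finset.range N, q i = 1 := by
    rw [hq, ← Finset.sum_div, ← hS, div_self hSpos.ne']
  -- Step 1: Gibbs
  have step1 : ∑ i ∈ Finset.range N, q i * Real.log (p i)
      ≤ ∑ i ∈ Finset.range N, q i * Real.log (q i) := by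
    apply gibbs _ p q hp hqnn (le_of_eq hsum) hqsum
    intro i hi hqi
    by_contra hpi
    push_neg at hpi
    have : p i = 0 := le_antisymm hpi (hp i hi)
    rw [hq] at hqi
    simp [this, Real.zero_rpow ht0.ne'] at hqi
  -- Step 2: Chebyshev
  have step2 : ∑ i ∈ Finset.range N, q i * (-Real.log (p i))
      ≤ ∑ i ∈ Finset.range N, p i * (-Real.log (p i)) := by
    set g : ℕ → ℝ := fun i => p i ^ (t - 1) with hg
    set f : ℕ → ℝ := fun i => -Real.log (p i) with hf
    have hcheb := weighted_cheb (Finset.range N) p f g hp hsum ?_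
    · have hpg : ∀ i ∈ Finset.range N, p i * g i = p i ^ t := by
        intro i hi
        rcases eq_or_lt_of_le (hp i hi) with h0 | h0
        · rw [hg]
          simp [← h0, Real.zero_rpow ht0.ne', Real.zero_rpow (by linarith : t - 1 ≠ 0)]
        · show p i * p i ^ (t - 1) = p i ^ t
          calc p i * p i ^ (t - 1) = p i ^ (1:ℝ) * p i ^ (t - 1) := by rw [Real.rpow_one]
            _ = p i ^ (1 + (t - 1)) := (Real.rpow_add h0 _ _).symm
            _ = p i ^ t := by norm_num
      have hSg : ∑ i ∈ Finset.range N, p i * g i = S := by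
        rw [Finset.sum_congr rfl hpg]
      have hq_eq : ∀ i ∈ Finset.range N, q i * f i = (p i * (g i * f i)) / S := by
        intro i hi
        rw [hq]; simp only
        rw [← hpg i hi]
        ring
      rw [Finset.sum_congr rfl hq_eq, ← Finset.sum_div]
      rw [div_le_iff₀ hSpos]
      calc ∑ i ∈ Finset.range N, p i * (g i * f i)
          ≤ (∑ i ∈ Finset.range N, p i * g i) * (∑ i ∈ Finset.range N, p i * f i) := hcheb
        _ = (∑ i ∈ Finset.range N, p i * f i) * S := by rw [hSg]; ring
    · intro i hi j hj hi0 hj0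
      rcases le_total (p i) (p j) with hij | hij
      · apply mul_nonpos_of_nonpos_of_nonneg
        · simp only [hg, sub_nonpos]
          exact Real.rpow_le_rpow hi0.le hij (by linarith)
        · simp only [hf, neg_sub_neg, sub_nonneg]
          exact Real.log_le_log hi0 hij
      · apply mul_nonpos_of_nonneg_of_nonpos
        · simp only [hg, sub_nonneg]
          exact Real.rpow_le_rpow hj0.le hij (by linarith)
        · simp only [hf, neg_sub_neg, sub_nonpos]
          exact Real.log_le_log hj0 hij
  simp only [mul_neg, Finset.sum_neg_distrib] at step2
  have goal1 : -∑ i ∈ Finset.range N, q i * Real.log (q i)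
      ≤ -∑ i ∈ Finset.range N, q i * Real.log (p i) := by linarith
  linarith


/-- **Entropy monotonicity in the power exponent.**
For a probability vector `x` (entries in `[0,1]`, summing to `1`) and real
exponents `β₂ > β₁ > 0`, the Shannon entropy of the normalized power
distribution `X̂^{(β)}_i = x i ^ β / ∑_j x j ^ β` is monotonically
non-increasing in the exponent:
`H(X̂^{(β₂)}) ≤ H(X̂^{(β₁)})` where `H(p) = -∑ i, p i * log (p i)`. -/
theorem enhancedERA_entropy_antitone
    (N : ℕ) (hN : 0 < N) (x : ℕ → ℝ)
    (hnonneg : ∀ i, i < N → 0 ≤ x i)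
    (hle1 : ∀ i, i < N → x i ≤ 1)
    (hsum : ∑ i ∈ Finset.range N, x i = 1)
    (β₁ β₂ : ℝ) (hβ₁ : 0 < β₁) (hβ : β₁ < β₂) :
    -∑ i ∈ Finset.range N,
        (x i ^ β₂ / ∑ j ∈ Finset.range N, x j ^ β₂) *
          Real.log (x i ^ β₂ / ∑ j ∈ Finset.range N, x j ^ β₂)
      ≤ -∑ i ∈ Finset.range N,
        (x i ^ β₁ / ∑ j ∈ Finset.range N, x j ^ β₁) *
          Real.log (x i ^ β₁ / ∑ j ∈ Finset.range N, x j ^ β₁) := by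
  obtain ⟨k, hk, hkpos⟩ : ∃ k ∈ Finset.range N, 0 < x k := by
    by_contra hcon
    push_neg at hcon
    have : ∑ i ∈ Finset.range N, x i ≤ 0 :=
      Finset.sum_nonpos fun i hi => hcon i hi
    linarith
  have hxnn : ∀ i ∈ Finset.range N, 0 ≤ x i := fun i hi =>
    hnonneg i (Finset.mem_range.mp hi)
  set S₁ : ℝ := ∑ j ∈ Finset.range N, x j ^ β₁ with hS₁
  set S₂ : ℝ := ∑ j ∈ Finset.range N, x j ^ β₂ with hS₂
  have hS₁pos : 0 < S₁ := by
    have h1 : 0 < x k ^ β₁ := Real.rpow_pos_of_pos hkpos β₁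
    have h2 : x k ^ β₁ ≤ S₁ :=
      Finset.single_le_sum (fun i hi => Real.rpow_nonneg (hxnn i hi) β₁) hk
    linarith
  have hS₂pos : 0 < S₂ := by
    have h1 : 0 < x k ^ β₂ := Real.rpow_pos_of_pos hkpos β₂
    have h2 : x k ^ β₂ ≤ S₂ :=
      Finset.single_le_sum (fun i hi => Real.rpow_nonneg (hxnn i hi) β₂) hk
    linarith
  set t : ℝ := β₂ / β₁ with htdef
  have ht : 1 < t := (one_lt_div hβ₁).mpr hβ
  set p : ℕ → ℝ := fun i => x i ^ β₁ / S₁ with hpdef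
  have hp : ∀ i ∈ Finset.range N, 0 ≤ p i := fun i hi =>
    div_nonneg (Real.rpow_nonneg (hxnn i hi) β₁) hS₁pos.le
  have hpsum : ∑ i ∈ Finset.range N, p i = 1 := by
    show ∑ i ∈ Finset.range N, x i ^ β₁ / S₁ = 1
    rw [← Finset.sum_div, ← hS₁, div_self hS₁pos.ne']
  have hS₁t : (0:ℝ) < S₁ ^ t := Real.rpow_pos_of_pos hS₁pos t
  have hβt : β₁ * t = β₂ := by rw [htdef]; field_simp
  have hpt : ∀ i ∈ Finset.range N, p i ^ t = x i ^ β₂ / S₁ ^ t := by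
    intro i hi
    show (x i ^ β₁ / S₁) ^ t = x i ^ β₂ / S₁ ^ t
    rw [Real.div_rpow (Real.rpow_nonneg (hxnn i hi) β₁) hS₁pos.le,
      ← Real.rpow_mul (hxnn i hi), hβt]
  have hsumt : ∑ j ∈ Finset.range N, p j ^ t = S₂ / S₁ ^ t := by
    rw [Finset.sum_congr rfl hpt, ← Finset.sum_div, ← hS₂]
  have hqt : ∀ i ∈ Finset.range N,
      p i ^ t / ∑ j ∈ Finset.range N, p j ^ t = x i ^ β₂ / S₂ := by
    intro i hi
    rw [hpt i hi, hsumt]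
    field_simp
  have key := entropy_pow_le N p hp hpsum t ht
  have hL : ∑ i ∈ Finset.range N, (p i ^ t / ∑ j ∈ Finset.range N, p j ^ t) *
        Real.log (p i ^ t / ∑ j ∈ Finset.range N, p j ^ t)
      = ∑ i ∈ Finset.range N, (x i ^ β₂ / S₂) * Real.log (x i ^ β₂ / S₂) := by
    refine Finset.sum_congr rfl fun i hi => ?_
    rw [hqt i hi]
  rw [hL] at key
  exact key
end

section
/- Monotonicity of softmax entropy in temperature: let N ≥ 2, let z̄ = (z̄_1, ..., z̄_N) be a real vector, and for T > 0 let ẑ^{(T)} denote the temperature-T softmax distribution with ẑ^{(T)}_i = exp(z̄_i/T)/(Σ_{k=1}^N exp(z̄_k/T)). Then for any two temperatures 0 < T_1 ≤ T_2, the Shannon entropy satisfies H(ẑ^{(T_1)}) ≤ H(ẑ^{(T_2)}); that is, decreasing the temperature decreases (does not increase) the entropy of the softmax output. -/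
private lemma gibbs_aux {N : ℕ} (p q : Fin N → ℝ) (hp : ∀ i, 0 < p i) (hq : ∀ i, 0 < q i)
    (hps : ∑ i, p i = 1) (hqs : ∑ i, q i = 1) :
    -∑ i, p i * Real.log (p i) ≤ -∑ i, p i * Real.log (q i) := by
  have h : ∑ i, (p i * Real.log (q i) - p i * Real.log (p i)) ≤ 0 := by
    calc ∑ i, (p i * Real.log (q i) - p i * Real.log (p i))
        ≤ ∑ i, (q i - p i) := by
          apply Finset.sum_le_sum
          intro i _
          have h1 := Real.log_le_sub_one_of_pos (div_pos (hq i) (hp i))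
          rw [Real.log_div (hq i).ne' (hp i).ne'] at h1
          have h2 := mul_le_mul_of_nonneg_left h1 (hp i).le
          have h3 : p i * (q i / p i - 1) = q i - p i := by
            rw [mul_sub, mul_one, mul_div_cancel₀ _ (hp i).ne']
          rw [h3] at h2
          linarith [h2, mul_sub (p i) (Real.log (q i)) (Real.log (p i))]
      _ = 0 := by rw [Finset.sum_sub_distrib, hps, hqs]; ring
  rw [Finset.sum_sub_distrib] at h
  linarith

private lemma cheb_aux {N : ℕ} (z : Fin N → ℝ) (T₁ T₂ : ℝ) (hT₁ : 0 < T₁) (hT₂ : 0 < T₂)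
    (hT : T₁ ≤ T₂) :
    (∑ i, z i * Real.exp (z i / T₂)) * (∑ i, Real.exp (z i / T₁))
      ≤ (∑ i, z i * Real.exp (z i / T₁)) * (∑ i, Real.exp (z i / T₂)) := by
  set f : Fin N → ℝ := fun i => Real.exp (z i / T₁) with hf
  set g : Fin N → ℝ := fun i => Real.exp (z i / T₂) with hg
  have key : ∀ a b : ℝ, 0 ≤ (a - b) * (Real.exp (a/T₁) * Real.exp (b/T₂)
      - Real.exp (a/T₂) * Real.exp (b/T₁)) := by
    intro a b
    rw [← Real.exp_add, ← Real.exp_add]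
    have hd : a/T₁ + b/T₂ - (a/T₂ + b/T₁) = (a - b) * (1/T₁ - 1/T₂) := by
      field_simp; ring
    have hi : 1/T₂ ≤ 1/T₁ := one_div_le_one_div_of_le hT₁ hT
    rcases le_total b a with h | h
    · have h1 : Real.exp (a/T₂ + b/T₁) ≤ Real.exp (a/T₁ + b/T₂) :=
        Real.exp_le_exp.2 (by nlinarith)
      nlinarith
    · have h1 : Real.exp (a/T₁ + b/T₂) ≤ Real.exp (a/T₂ + b/T₁) :=
        Real.exp_le_exp.2 (by nlinarith)
      nlinarith
  have h2 : 0 ≤ ∑ i, ∑ j, (z i - z j) * (f i * g j - g i * f j) :=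
    Finset.sum_nonneg fun i _ => Finset.sum_nonneg fun j _ => key (z i) (z j)
  have h3 : ∑ i, ∑ j, (z i - z j) * (f i * g j - g i * f j)
      = 2 * ((∑ i, z i * f i) * (∑ i, g i) - (∑ i, z i * g i) * (∑ i, f i)) := by
    have e1 : ∀ i j : Fin N, (z i - z j) * (f i * g j - g i * f j)
        = (z i * f i) * g j - (z i * g i) * f j - f i * (z j * g j) + g i * (z j * f j) := by
      intros; ring
    simp_rw [e1, Finset.sum_add_distrib, Finset.sum_sub_distrib, ← Finset.mul_sum,
      ← Finset.sum_mul]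
    ring
  nlinarith [h2, h3]

/-- **Monotonicity of softmax entropy in the temperature.**
For a real vector `z̄` and temperatures `0 < T₁ ≤ T₂`, the Shannon entropy of
the temperature softmax `ẑ^{(T)} i = exp (z̄ i / T) / ∑ k, exp (z̄ k / T)`
satisfies `H(ẑ^{(T₁)}) ≤ H(ẑ^{(T₂)})`, where `H(p) = -∑ i, p i * log (p i)`. -/
theorem softmax_entropy_monotone_in_temperature
    (N : ℕ) (hN : 2 ≤ N) (z : Fin N → ℝ)
    (T₁ T₂ : ℝ) (hT₁ : 0 < T₁) (hT : T₁ ≤ T₂) :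
    -∑ i, (Real.exp (z i / T₁) / ∑ k, Real.exp (z k / T₁)) *
        Real.log (Real.exp (z i / T₁) / ∑ k, Real.exp (z k / T₁))
      ≤ -∑ i, (Real.exp (z i / T₂) / ∑ k, Real.exp (z k / T₂)) *
        Real.log (Real.exp (z i / T₂) / ∑ k, Real.exp (z k / T₂)) := by
  have hT₂ : 0 < T₂ := lt_of_lt_of_le hT₁ hT
  have hNe : Nonempty (Fin N) := ⟨⟨0, by omega⟩⟩
  set Z₁ : ℝ := ∑ k, Real.exp (z k / T₁) with hZ₁def
  set Z₂ : ℝ := ∑ k, Real.exp (z k / T₂) with hZ₂def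
  have hZ₁ : 0 < Z₁ := Finset.sum_pos (fun i _ => Real.exp_pos _) Finset.univ_nonempty
  have hZ₂ : 0 < Z₂ := Finset.sum_pos (fun i _ => Real.exp_pos _) Finset.univ_nonempty
  set p : Fin N → ℝ := fun i => Real.exp (z i / T₁) / Z₁ with hpdef
  set q : Fin N → ℝ := fun i => Real.exp (z i / T₂) / Z₂ with hqdef
  have hp : ∀ i, 0 < p i := fun i => div_pos (Real.exp_pos _) hZ₁
  have hq : ∀ i, 0 < q i := fun i => div_pos (Real.exp_pos _) hZ₂
  have hps : ∑ i, p i = 1 := by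
    simp only [hpdef, ← Finset.sum_div]
    exact div_self hZ₁.ne'
  have hqs : ∑ i, q i = 1 := by
    simp only [hqdef, ← Finset.sum_div]
    exact div_self hZ₂.ne'
  have hlogq : ∀ i, Real.log (q i) = z i / T₂ - Real.log Z₂ := by
    intro i
    rw [hqdef]
    simp only
    rw [Real.log_div (Real.exp_pos _).ne' hZ₂.ne', Real.log_exp]
  -- Gibbs step
  have step1 : -∑ i, p i * Real.log (p i) ≤ -∑ i, p i * Real.log (q i) :=
    gibbs_aux p q hp hq hps hqs
  -- cross entropy comparison
  have hmean : ∑ i, q i * z i ≤ ∑ i, p i * z i := by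
    have hc := cheb_aux z T₁ T₂ hT₁ hT₂ hT
    have hp' : ∑ i, p i * z i = (∑ i, z i * Real.exp (z i / T₁)) / Z₁ := by
      rw [Finset.sum_div]
      apply Finset.sum_congr rfl
      intro i _
      rw [hpdef]; ring
    have hq' : ∑ i, q i * z i = (∑ i, z i * Real.exp (z i / T₂)) / Z₂ := by
      rw [Finset.sum_div]
      apply Finset.sum_congr rfl
      intro i _
      rw [hqdef]; ring
    rw [hp', hq', div_le_div_iff₀ hZ₂ hZ₁]
    linarith
  have step2 : -∑ i, p i * Real.log (q i) ≤ -∑ i, q i * Real.log (q i) := by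
    have e1 : ∑ i, p i * Real.log (q i)
        = (∑ i, p i * z i) / T₂ - Real.log Z₂ := by
      simp_rw [hlogq, mul_sub, Finset.sum_sub_distrib, ← Finset.sum_mul, hps,
        ← mul_div_assoc, ← Finset.sum_div]
      ring
    have e2 : ∑ i, q i * Real.log (q i)
        = (∑ i, q i * z i) / T₂ - Real.log Z₂ := by
      simp_rw [hlogq, mul_sub, Finset.sum_sub_distrib, ← Finset.sum_mul, hqs,
        ← mul_div_assoc, ← Finset.sum_div]
      ring
    rw [e1, e2]
    have hdiv : (∑ i, q i * z i) / T₂ ≤ (∑ i, p i * z i) / T₂ := by gcongr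
    linarith
  exact le_trans step1 step2
end
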